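/- Let g : ℝ → [0,∞) be convex and suppose there exists a > 0 such that g is increasing on [a,∞). Let α, β ≥ 0 and assume that α > 0, or β > 0, or g is strictly convex; assume in addition that if β = 0 then for every t ≥ a there exists t₁ > t with g(t₁) > g(t). Then the Mooney–Rivlin stored-energy function W : ℝ^{3×3} → ℝ defined by W(A) = α|A|² + β|cof A|² + g(det A) is not recoverable: there do not exist functions w̄ : ℝ^{3×3} → ℝ and w̃ : [0,∞) → ℝ such that for every A ∈ ℝ^{3×3} the function z ↦ w̃(|Az|) is integrable on S² with w̄(A) = ∫_{S²} w̃(|Az|) dH²(z), and W = w̄^{qc}. -/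

import Mathlib

open MeasureTheory Metric
open scoped ENNReal

noncomputable section

/-- The special orthogonal group `SO(k)`, viewed as a set of `k × k` real matrices. -/
def SO (k : ℕ) : Set (Matrix (Fin k) (Fin k) ℝ) :=
  {R | R * R.transpose = 1 ∧ R.det = 1}

/-- The Frobenius norm of a real matrix. -/
def frob {m n : ℕ} (A : Matrix (Fin m) (Fin n) ℝ) : ℝ :=
  Real.sqrt (∑ i, ∑ j, A i j ^ 2)

/-- The cofactor matrix of a `3 × 3` matrix: the transpose of the adjugate,
so that `A * (cof A)ᵀ = (det A) • 1`. -/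
def cof (A : Matrix (Fin 3) (Fin 3) ℝ) : Matrix (Fin 3) (Fin 3) ℝ :=
  (Matrix.adjugate A).transpose

/-- The unit sphere `S^{n-1}` in `ℝ^n`. -/
def unitSphere (n : ℕ) : Set (EuclideanSpace ℝ (Fin n)) :=
  sphere (0 : EuclideanSpace ℝ (Fin n)) 1

/-- The open unit cube `(0,1)^n` in `ℝ^n`. -/
def unitCube (n : ℕ) : Set (EuclideanSpace ℝ (Fin n)) :=
  {x | ∀ i, x i ∈ Set.Ioo (0 : ℝ) 1}

/-- The Jacobian matrix `Dv(x)` of a map `v : ℝ^n → ℝ^m` at the point `x`: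
its `(i, j)` entry is `∂v_i/∂x_j (x)`. -/
def jac {n m : ℕ} (v : EuclideanSpace ℝ (Fin n) → EuclideanSpace ℝ (Fin m))
    (x : EuclideanSpace ℝ (Fin n)) : Matrix (Fin m) (Fin n) ℝ :=
  Matrix.of fun i j => fderiv ℝ v x (EuclideanSpace.single j 1) i

/-- Quasiconvexity in the sense of Morrey: `ψ A ≤ ∫_{(0,1)^n} ψ(A + Dv(x)) dx` for every
matrix `A` and every smooth map `v` with compact support contained in `(0,1)^n`. -/
def MorreyQuasiconvex {n m : ℕ} (ψ : Matrix (Fin m) (Fin n) ℝ → ℝ) : Prop :=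
  ∀ (A : Matrix (Fin m) (Fin n) ℝ) (v : EuclideanSpace ℝ (Fin n) → EuclideanSpace ℝ (Fin m)),
    ContDiff ℝ (⊤ : ℕ∞) v → HasCompactSupport v → tsupport v ⊆ unitCube n →
    ψ A ≤ ∫ x in unitCube n, ψ (A + jac v x)

/-- Strict quasiconvexity in the sense of Morrey: the inequality is strict whenever
the test map `v` is not identically zero. -/
def StrictMorreyQuasiconvex {n m : ℕ} (ψ : Matrix (Fin m) (Fin n) ℝ → ℝ) : Prop :=
  ∀ (A : Matrix (Fin m) (Fin n) ℝ) (v : EuclideanSpace ℝ (Fin n) → EuclideanSpace ℝ (Fin m)),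
    ContDiff ℝ (⊤ : ℕ∞) v → HasCompactSupport v → tsupport v ⊆ unitCube n → v ≠ 0 →
    ψ A < ∫ x in unitCube n, ψ (A + jac v x)

/-- The quasiconvexification (quasiconvex envelope) of `ψ`:
`ψ^{qc}(A) = sup { v(A) : v quasiconvex, v ≤ ψ }`. -/
def qcEnvelope {n m : ℕ} (ψ : Matrix (Fin m) (Fin n) ℝ → ℝ)
    (A : Matrix (Fin m) (Fin n) ℝ) : ℝ :=
  sSup {r | ∃ v : Matrix (Fin m) (Fin n) ℝ → ℝ,
    MorreyQuasiconvex v ∧ (∀ B, v B ≤ ψ B) ∧ v A = r}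



lemma pi_partial_integral_zero {n : ℕ} (W : (Fin (n+1) → ℝ) → ℝ) (hW : ContDiff ℝ (⊤ : ℕ∞) W)
    (hcs : HasCompactSupport W) (j : Fin (n+1)) :
    ∫ y, fderiv ℝ W y (Pi.single j 1) = 0 := by
  obtain ⟨R, hR⟩ := hcs.isBounded.subset_closedBall 0
  set R' : ℝ := |R| + 1 with hR'def
  have habs : (0:ℝ) ≤ |R| := abs_nonneg R
  have hRR' : R < R' := lt_of_le_of_lt (le_abs_self R) (by simp [hR'def])
  set G : (Fin (n+1) → ℝ) → ℝ := fun y => fderiv ℝ W y (Pi.single j 1) with hGdef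
  set ι : (Fin n → ℝ) → ℝ → (Fin (n+1) → ℝ) := fun c t => j.insertNth t c with hιdef
  have hGcont : Continuous G := (hW.continuous_fderiv (by simp)).clm_apply continuous_const
  have hGcs : HasCompactSupport G := by
    apply (hcs.fderiv ℝ).mono
    intro y hy
    simp only [Function.mem_support, hGdef] at hy ⊢
    intro h0
    exact hy (by rw [h0]; rfl)
  have hGint : Integrable G := hGcont.integrable_of_hasCompactSupport hGcs
  have hins : ∀ (c : Fin n → ℝ) (t : ℝ), ι c t = ι c 0 + t • (Pi.single j 1 : Fin (n+1) → ℝ) := by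
    intro c t
    funext k
    rcases eq_or_ne k j with rfl | hne
    · simp [hιdef]
    · obtain ⟨l, rfl⟩ := Fin.exists_succAbove_eq hne
      simp [hιdef, Fin.insertNth_apply_succAbove, Pi.single_eq_of_ne (Fin.succAbove_ne j l)]
  have hder : ∀ (c : Fin n → ℝ) (t : ℝ),
      HasDerivAt (fun s => W (ι c s)) (G (ι c t)) t := by
    intro c t
    have h1 : HasDerivAt (fun s : ℝ => ι c s) (Pi.single j 1) t := by
      have h2 : HasDerivAt (fun s : ℝ => ι c 0 + s • (Pi.single j 1 : Fin (n+1) → ℝ))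
          (Pi.single j 1) t := by
        simpa using ((hasDerivAt_id t).smul_const (Pi.single j (1:ℝ))).const_add (ι c 0)
      have h3 : (fun s : ℝ => ι c s)
          = fun s : ℝ => ι c 0 + s • (Pi.single j 1 : Fin (n+1) → ℝ) := by
        funext s; exact hins c s
      rw [h3]; exact h2
    exact ((hW.differentiable (by simp) (ι c t)).hasFDerivAt).comp_hasDerivAt t h1
  have hzero : ∀ (c : Fin n → ℝ) (t : ℝ), R' ≤ |t| →
      W (ι c t) = 0 ∧ G (ι c t) = 0 := by
    intro c t ht
    have hnot : ι c t ∉ tsupport W := by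
      intro hmem
      have h1 : ‖ι c t‖ ≤ R := by simpa using mem_closedBall_iff_norm.mp (hR hmem)
      have h2 : |t| ≤ ‖ι c t‖ := by
        have := norm_le_pi_norm (ι c t) j
        simpa [hιdef, Fin.insertNth_apply_same] using this
      linarith
    refine ⟨image_eq_zero_of_notMem_tsupport hnot, ?_⟩
    have h4 : fderiv ℝ W (ι c t) = 0 := by
      by_contra h
      exact hnot (support_fderiv_subset ℝ (Function.mem_support.mpr h))
    simp [hGdef, h4]
  have hinner : ∀ c : Fin n → ℝ, ∫ t : ℝ, G (ι c t) = 0 := by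
    intro c
    have hcont : Continuous fun t : ℝ => G (ι c t) := by
      apply hGcont.comp
      have hcont2 : Continuous fun s : ℝ => ι c 0 + s • (Pi.single j 1 : Fin (n+1) → ℝ) :=
        continuous_const.add (continuous_id.smul continuous_const)
      exact hcont2.congr fun s => (hins c s).symm
    have hle : -R' ≤ R' := by linarith
    have e1 : ∫ t : ℝ, G (ι c t) = ∫ t in Set.Ioc (-R') R', G (ι c t) := by
      rw [MeasureTheory.setIntegral_eq_integral_of_forall_compl_eq_zero]
      intro t ht
      simp only [Set.mem_Ioc, not_and_or, not_le, not_lt] at ht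
      have : R' ≤ |t| := by
        rcases ht with h | h
        · rw [abs_of_nonpos (by linarith)]; linarith
        · rw [abs_of_pos (by linarith)]; linarith
      exact (hzero c t this).2
    have e2 : ∫ t in Set.Ioc (-R') R', G (ι c t) = ∫ t in (-R')..R', G (ι c t) :=
      (intervalIntegral.integral_of_le hle).symm
    have e3 : ∫ t in (-R')..R', G (ι c t) = W (ι c R') - W (ι c (-R')) := by
      have hderiv : (fun t : ℝ => G (ι c t)) = deriv fun s => W (ι c s) := by
        funext t; exact ((hder c t).deriv).symm
      rw [hderiv]
      apply intervalIntegral.integral_deriv_eq_sub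
      · intro x _; exact (hder c x).differentiableAt
      · rw [← hderiv]; exact hcont.intervalIntegrable _ _
    have hz1 : W (ι c R') = 0 := (hzero c R' (by rw [abs_of_pos (by linarith)])).1
    have hz2 : W (ι c (-R')) = 0 := (hzero c (-R') (by rw [abs_neg, abs_of_pos (by linarith)])).1
    rw [e1, e2, e3, hz1, hz2, sub_zero]
  -- transfer via piFinSuccAbove
  have mp := (MeasureTheory.volume_preserving_piFinSuccAbove (fun _ : Fin (n+1) => ℝ) j).symm
  have hemb := (MeasurableEquiv.piFinSuccAbove (fun _ : Fin (n+1) => ℝ) j).symm.measurableEmbedding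
  have e4 : ∫ y, G y = ∫ p : ℝ × (Fin n → ℝ),
      G ((MeasurableEquiv.piFinSuccAbove (fun _ : Fin (n+1) => ℝ) j).symm p) :=
    (mp.integral_comp hemb G).symm
  have hintp : Integrable
      (fun p : ℝ × (Fin n → ℝ) =>
        G ((MeasurableEquiv.piFinSuccAbove (fun _ : Fin (n+1) => ℝ) j).symm p)) :=
    (mp.integrable_comp_emb hemb).mpr hGint
  have e5 : ∀ p : ℝ × (Fin n → ℝ),
      G ((MeasurableEquiv.piFinSuccAbove (fun _ : Fin (n+1) => ℝ) j).symm p) = G (ι p.2 p.1) := by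
    intro p
    congr 1
  rw [e4]
  calc ∫ p : ℝ × (Fin n → ℝ),
        G ((MeasurableEquiv.piFinSuccAbove (fun _ : Fin (n+1) => ℝ) j).symm p)
      = ∫ t : ℝ, ∫ c : Fin n → ℝ,
          G ((MeasurableEquiv.piFinSuccAbove (fun _ : Fin (n+1) => ℝ) j).symm (t, c)) := by
        rw [← MeasureTheory.integral_prod _ hintp]
        rfl
    _ = ∫ c : Fin n → ℝ, ∫ t : ℝ,
          G ((MeasurableEquiv.piFinSuccAbove (fun _ : Fin (n+1) => ℝ) j).symm (t, c)) := by
        apply MeasureTheory.integral_integral_swap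
        exact hintp
    _ = ∫ c : Fin n → ℝ, (0:ℝ) := by
        apply integral_congr_ae
        filter_upwards with c
        rw [← hinner c]
        apply integral_congr_ae
        filter_upwards with t
        rw [e5 (t, c)]
    _ = 0 := integral_zero _ _





lemma euclidean_partial_integral_zero (w : EuclideanSpace ℝ (Fin 3) → ℝ)
    (hw : ContDiff ℝ (⊤ : ℕ∞) w) (hcs : HasCompactSupport w) (j : Fin 3) :
    ∫ x, fderiv ℝ w x (EuclideanSpace.single j 1) = 0 := by
  set κ := EuclideanSpace.equiv (Fin 3) ℝ with hκ
  set W : (Fin 3 → ℝ) → ℝ := w ∘ κ.symm with hW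
  have hWc : ContDiff ℝ (⊤ : ℕ∞) W := hw.comp κ.symm.contDiff
  have hWcs : HasCompactSupport W := hcs.comp_homeomorph κ.symm.toHomeomorph
  have hwW : ∀ x, w x = W (κ x) := by
    intro x; simp [hW, hκ]
  have hsingle : κ (EuclideanSpace.single j 1) = Pi.single j 1 := by
    funext k
    simp [hκ, EuclideanSpace.single_apply, Pi.single_apply]
  have hpt : ∀ x, fderiv ℝ w x (EuclideanSpace.single j 1)
      = fderiv ℝ W (κ x) (Pi.single j 1) := by
    intro x
    have h1 : fderiv ℝ (W ∘ κ) x = (fderiv ℝ W (κ x)).comp (κ : _ →L[ℝ] _) :=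
      κ.comp_right_fderiv
    have h2 : w = W ∘ κ := by funext y; exact hwW y
    rw [h2, h1]
    simp [hsingle]
  have htrans := (EuclideanSpace.volume_preserving_symm_measurableEquiv_toLp (Fin 3)).integral_comp
    (MeasurableEquiv.toLp 2 (Fin 3 → ℝ)).symm.measurableEmbedding
    (fun y => fderiv ℝ W y (Pi.single j 1))
  calc ∫ x, fderiv ℝ w x (EuclideanSpace.single j 1)
      = ∫ x, fderiv ℝ W (κ x) (Pi.single j 1) := by
        apply integral_congr_ae; filter_upwards with x; rw [hpt]
    _ = ∫ y, fderiv ℝ W y (Pi.single j 1) := htrans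
    _ = 0 := pi_partial_integral_zero (n := 2) W hWc hWcs j

lemma jac_integral_zero {u : EuclideanSpace ℝ (Fin 3) → EuclideanSpace ℝ (Fin 3)}
    (hu : ContDiff ℝ (⊤ : ℕ∞) u) (hcs : HasCompactSupport u) (hts : tsupport u ⊆ unitCube 3)
    (i j : Fin 3) :
    ∫ x in unitCube 3, jac u x i j = 0 := by
  set w : EuclideanSpace ℝ (Fin 3) → ℝ := fun x => EuclideanSpace.proj i (u x) with hw
  have hwc : ContDiff ℝ (⊤ : ℕ∞) w := by
    have := (EuclideanSpace.proj (𝕜 := ℝ) i).contDiff.comp hu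
    exact this
  have hwcs : HasCompactSupport w := by
    apply hcs.mono
    intro x hx
    simp only [Function.mem_support, hw] at hx ⊢
    intro h0; exact hx (by rw [h0]; simp)
  have hpt : ∀ x, jac u x i j = fderiv ℝ w x (EuclideanSpace.single j 1) := by
    intro x
    have h1 : fderiv ℝ w x = (EuclideanSpace.proj i).comp (fderiv ℝ u x) := by
      have : w = (EuclideanSpace.proj i) ∘ u := by funext y; simp [hw]
      rw [this, fderiv_comp x (EuclideanSpace.proj i).differentiableAt
        (hu.differentiable (by simp) x)]
      rw [ContinuousLinearMap.fderiv]
    rw [h1]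
    rfl
  have hout : ∀ x ∉ unitCube 3, jac u x i j = 0 := by
    intro x hx
    have hxs : x ∉ tsupport w := by
      intro hmem
      apply hx
      apply hts
      refine closure_mono ?_ hmem
      intro y hy
      simp only [Function.mem_support, hw] at hy ⊢
      intro h0; exact hy (by rw [h0]; simp)
    have h4 : fderiv ℝ w x = 0 := by
      by_contra h
      exact hxs (support_fderiv_subset ℝ (Function.mem_support.mpr h))
    rw [hpt x, h4]; rfl
  rw [MeasureTheory.setIntegral_eq_integral_of_forall_compl_eq_zero hout]
  calc ∫ x, jac u x i j = ∫ x, fderiv ℝ w x (EuclideanSpace.single j 1) := by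
        apply integral_congr_ae; filter_upwards with x; rw [hpt]
    _ = 0 := euclidean_partial_integral_zero w hwc hwcs j


lemma tEL_apply (M : Matrix (Fin 3) (Fin 3) ℝ) (z : EuclideanSpace ℝ (Fin 3)) (i : Fin 3) :
    (Matrix.toEuclideanLin M z) i = M.mulVec z i := by
  rw [Matrix.toEuclideanLin_apply]

lemma frob_nonneg {m n : ℕ} (A : Matrix (Fin m) (Fin n) ℝ) : 0 ≤ frob A := Real.sqrt_nonneg _

lemma frob_sq {m n : ℕ} (A : Matrix (Fin m) (Fin n) ℝ) : frob A ^ 2 = ∑ i, ∑ j, A i j ^ 2 :=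
  Real.sq_sqrt (by positivity)

lemma tEL_norm_le (M : Matrix (Fin 3) (Fin 3) ℝ) (z : EuclideanSpace ℝ (Fin 3)) :
    ‖Matrix.toEuclideanLin M z‖ ≤ frob M * ‖z‖ := by
  rw [EuclideanSpace.norm_eq, EuclideanSpace.norm_eq]
  have key : ∑ i, ‖(Matrix.toEuclideanLin M z) i‖ ^ 2
      ≤ (∑ i, ∑ j, M i j ^ 2) * ∑ j, ‖z j‖ ^ 2 := by
    rw [Finset.sum_mul]
    apply Finset.sum_le_sum
    intro i _
    rw [tEL_apply, Matrix.mulVec, dotProduct]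
    calc ‖∑ j, M i j * z j‖ ^ 2 = (∑ j, M i j * z j) ^ 2 := by rw [Real.norm_eq_abs, sq_abs]
      _ ≤ (∑ j, M i j ^ 2) * ∑ j, z j ^ 2 := Finset.sum_mul_sq_le_sq_mul_sq _ _ _
      _ = (∑ j, M i j ^ 2) * ∑ j, ‖z j‖ ^ 2 := by
          congr 1; apply Finset.sum_congr rfl; intro j _; rw [Real.norm_eq_abs, sq_abs]
  calc Real.sqrt (∑ i, ‖(Matrix.toEuclideanLin M z) i‖ ^ 2)
      ≤ Real.sqrt ((∑ i, ∑ j, M i j ^ 2) * ∑ j, ‖z j‖ ^ 2) := Real.sqrt_le_sqrt key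
    _ = frob M * Real.sqrt (∑ j, ‖z j‖ ^ 2) := by
        rw [Real.sqrt_mul (by positivity)]; rfl

lemma cube_subgrad (u v : EuclideanSpace ℝ (Fin 3)) :
    ‖u‖ ^ 3 + 3 * ‖u‖ * (inner ℝ u (v - u) : ℝ) ≤ ‖v‖ ^ 3 := by
  have h1 : (inner ℝ u (v - u) : ℝ) = (inner ℝ u v : ℝ) - ‖u‖ ^ 2 := by
    rw [inner_sub_right, real_inner_self_eq_norm_sq]
  have h2 : (inner ℝ u v : ℝ) ≤ ‖u‖ * ‖v‖ := real_inner_le_norm u v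
  have h3 : 0 ≤ ‖u‖ := norm_nonneg u
  have h4 : 0 ≤ ‖v‖ := norm_nonneg v
  nlinarith [sq_nonneg (‖v‖ - ‖u‖), mul_nonneg (mul_nonneg h3 h3) h4]

lemma smul_one_apply (s : ℝ) (i j : Fin 3) :
    (s • (1 : Matrix (Fin 3) (Fin 3) ℝ)) i j = if i = j then s else 0 := by
  simp [Matrix.smul_apply, Matrix.one_apply, mul_ite]

lemma frobsq_smul_one (s : ℝ) : frob (s • (1 : Matrix (Fin 3) (Fin 3) ℝ)) ^ 2 = 3 * s ^ 2 := by
  rw [frob_sq]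
  simp [smul_one_apply, Fin.sum_univ_three]
  ring

lemma det_smul_one (s : ℝ) : (s • (1 : Matrix (Fin 3) (Fin 3) ℝ)).det = s ^ 3 := by
  rw [Matrix.det_smul, Matrix.det_one]
  simp

lemma cof_smul_one (s : ℝ) : cof (s • (1 : Matrix (Fin 3) (Fin 3) ℝ)) = s ^ 2 • 1 := by
  rw [cof, Matrix.adjugate_smul, Matrix.adjugate_one]
  simp [Matrix.transpose_smul]

lemma tEL_smul_one (s : ℝ) (z : EuclideanSpace ℝ (Fin 3)) :
    Matrix.toEuclideanLin (s • (1 : Matrix (Fin 3) (Fin 3) ℝ)) z = s • z := by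
  apply PiLp.ext
  intro i
  rw [tEL_apply, Matrix.smul_mulVec, Matrix.one_mulVec]
  rfl

lemma tEL_std_norm (i : Fin 3) (t : ℝ) (z : EuclideanSpace ℝ (Fin 3)) :
    ‖Matrix.toEuclideanLin (Matrix.single i i t) z‖ = |t * z i| := by
  have h1 : ∀ r, (Matrix.single i i t).mulVec z r = if i = r then t * z i else 0 := by
    intro r
    rw [Matrix.mulVec, dotProduct]
    rcases eq_or_ne i r with rfl | hne
    · rw [Finset.sum_eq_single i]
      · simp [Matrix.single]
      · intro b _ hb; simp [Matrix.single, hb.symm]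
      · simp
    · rw [if_neg hne]
      apply Finset.sum_eq_zero
      intro b _
      simp [Matrix.single, hne]
  rw [EuclideanSpace.norm_eq]
  have h2 : ∀ r : Fin 3, ‖(Matrix.toEuclideanLin (Matrix.single i i t) z) r‖ ^ 2
      = if i = r then (t * z i) ^ 2 else 0 := by
    intro r
    rw [tEL_apply, h1 r]
    rcases eq_or_ne i r with rfl | hne
    · simp only [Real.norm_eq_abs, sq_abs, eq_self_iff_true, if_true, if_pos]
    · simp [hne]
  calc Real.sqrt (∑ r, ‖(Matrix.toEuclideanLin (Matrix.single i i t) z) r‖ ^ 2)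
      = Real.sqrt ((t * z i) ^ 2) := by
        congr 1
        rw [Finset.sum_congr rfl fun r _ => h2 r]
        simp
    _ = |t * z i| := Real.sqrt_sq_eq_abs _

lemma frobsq_std (i : Fin 3) (t : ℝ) : frob (Matrix.single i i t) ^ 2 = t ^ 2 := by
  rw [frob_sq]
  have : ∀ r s : Fin 3, (Matrix.single i i t) r s ^ 2
      = if i = r ∧ i = s then t ^ 2 else 0 := by
    intro r s
    by_cases h : i = r ∧ i = s
    · simp [Matrix.single, h]
    · rw [if_neg h]
      have : (Matrix.single i i t) r s = 0 := by
        simp only [Matrix.single, Matrix.of_apply]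
        rw [if_neg h]
      rw [this]; ring
  rw [Finset.sum_congr rfl fun r _ => Finset.sum_congr rfl fun s _ => this r s]
  simp [ite_and, Finset.sum_ite_eq]

lemma det_std (i : Fin 3) (t : ℝ) : (Matrix.single i i t).det = 0 := by
  obtain ⟨r, hr⟩ := exists_ne i
  apply Matrix.det_eq_zero_of_row_eq_zero r
  intro s
  simp [Matrix.single, Ne.symm hr]

lemma cof_std (i : Fin 3) (t : ℝ) : cof (Matrix.single i i t) = 0 := by
  rw [cof]
  have : Matrix.adjugate (Matrix.single i i t) = 0 := by
    ext a b
    rw [Matrix.adjugate_apply]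
    have h3 : ∃ r : Fin 3, r ≠ b ∧ r ≠ i := by
      revert b i; decide
    obtain ⟨r, hrb, hri⟩ := h3
    apply Matrix.det_eq_zero_of_row_eq_zero r
    intro s
    rw [Matrix.updateRow_ne hrb]
    simp [Matrix.single, Ne.symm hri]
  rw [this]
  rfl




lemma sphere_measurable : MeasurableSet (unitSphere 3) :=
  Metric.isClosed_sphere.measurableSet

lemma cube_measurable : MeasurableSet (unitCube 3) := by
  have : unitCube 3 = ⋂ i : Fin 3, (fun x : EuclideanSpace ℝ (Fin 3) => x i) ⁻¹' Set.Ioo 0 1 := by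
    ext x; simp [unitCube, Set.mem_iInter]
  rw [this]
  exact MeasurableSet.iInter fun i =>
    ((EuclideanSpace.proj (𝕜 := ℝ) i).continuous.measurable) measurableSet_Ioo

lemma cube_volume : volume (unitCube 3) = 1 := by
  have h1 : unitCube 3 = ((MeasurableEquiv.toLp 2 (Fin 3 → ℝ)).symm) ⁻¹'
      (Set.univ.pi fun _ : Fin 3 => Set.Ioo (0:ℝ) 1) := by
    ext x
    simp [unitCube, Set.mem_pi]
  rw [h1, (EuclideanSpace.volume_preserving_symm_measurableEquiv_toLp (Fin 3)).measure_preimage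
    ((MeasurableSet.univ_pi fun _ => measurableSet_Ioo).nullMeasurableSet)]
  rw [volume_pi_pi]
  simp

lemma cube_integral_const (c : ℝ) : ∫ _ in unitCube 3, c = c := by
  rw [setIntegral_const, measureReal_def, cube_volume]
  simp

lemma cube_finite : volume (unitCube 3) < ⊤ := by rw [cube_volume]; exact ENNReal.one_lt_top

-- integrability of bounded-continuous functions on the sphere
lemma sphere_integrable {f : EuclideanSpace ℝ (Fin 3) → ℝ} (hf : Continuous f)
    (hfin : μH[(3:ℝ)-1] (unitSphere 3) ≠ ⊤) :
    IntegrableOn f (unitSphere 3) μH[(3:ℝ)-1] := by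
  have hcpt : IsCompact (unitSphere 3) := isCompact_sphere 0 1
  obtain ⟨C, hC⟩ : ∃ C, ∀ z ∈ unitSphere 3, ‖f z‖ ≤ C := by
    rcases (hcpt.image (continuous_norm.comp hf)).bddAbove with ⟨C, hC⟩
    exact ⟨C, fun z hz => hC ⟨z, hz, rfl⟩⟩
  have hfc : Integrable (fun _ : EuclideanSpace ℝ (Fin 3) => C)
      ((μH[(3:ℝ)-1]).restrict (unitSphere 3)) := by
    rw [integrable_const_iff]
    right
    exact isFiniteMeasure_restrict.mpr hfin
  refine Integrable.mono' hfc (hf.aestronglyMeasurable.restrict) ?_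
  rw [ae_restrict_iff' sphere_measurable]
  filter_upwards with z hz
  exact hC z hz

lemma lin_minorant {g : ℝ → ℝ} (hconv : ConvexOn ℝ Set.univ g) (hg0 : ∀ t, 0 ≤ g t)
    {a t₁ : ℝ} (hat : a < t₁) (hgat : g a < g t₁) :
    ∃ sl : ℝ, 0 < sl ∧ ∀ x : ℝ, 0 ≤ x → sl * x - sl * t₁ ≤ g x := by
  set sl := (g t₁ - g a) / (t₁ - a) with hsl
  have hslpos : 0 < sl := div_pos (by linarith) (by linarith)
  refine ⟨sl, hslpos, ?_⟩
  intro x hx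
  rcases le_or_gt x t₁ with h | h
  · have : sl * x - sl * t₁ ≤ 0 := by nlinarith
    linarith [hg0 x]
  · have hslope := hconv.slope_mono_adjacent (Set.mem_univ a) (Set.mem_univ x) hat h
    rw [div_le_div_iff₀ (by linarith) (by linarith)] at hslope
    have hpos : (0:ℝ) < t₁ - a := by linarith
    have hsl' : sl * (t₁ - a) = g t₁ - g a := by
      rw [hsl]; field_simp
    have h4 : sl * (x - t₁) * (t₁ - a) ≤ (g x - g t₁) * (t₁ - a) := by nlinarith
    have h5 : sl * (x - t₁) ≤ g x - g t₁ := le_of_mul_le_mul_right h4 hpos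
    nlinarith [hg0 t₁]


lemma tEL_coord (N : Matrix (Fin 3) (Fin 3) ℝ) (z : EuclideanSpace ℝ (Fin 3)) (i : Fin 3) :
    (Matrix.toEuclideanLin N z) i = ∑ j, N i j * z j := by
  rw [tEL_apply]; rfl

lemma tEL_add (M N : Matrix (Fin 3) (Fin 3) ℝ) (z : EuclideanSpace ℝ (Fin 3)) :
    Matrix.toEuclideanLin (M + N) z
      = Matrix.toEuclideanLin M z + Matrix.toEuclideanLin N z := by
  rw [map_add]; rfl

lemma tEL_cont (M : Matrix (Fin 3) (Fin 3) ℝ) :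
    Continuous fun z : EuclideanSpace ℝ (Fin 3) => Matrix.toEuclideanLin M z :=
  (Matrix.toEuclideanLin M).continuous_of_finiteDimensional

lemma inner_expand (w : EuclideanSpace ℝ (Fin 3)) (N : Matrix (Fin 3) (Fin 3) ℝ)
    (z : EuclideanSpace ℝ (Fin 3)) :
    (inner ℝ w (Matrix.toEuclideanLin N z) : ℝ) = ∑ i, w i * ∑ j, N i j * z j := by
  rw [PiLp.inner_apply]
  refine Finset.sum_congr rfl fun i _ => ?_
  rw [tEL_coord, RCLike.inner_apply]
  simp
  ring

lemma phi_qc (c d : ℝ) (hc : 0 ≤ c)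
    (hmtop : μH[(3:ℝ)-1] (unitSphere 3) ≠ ⊤) :
    MorreyQuasiconvex (fun M : Matrix (Fin 3) (Fin 3) ℝ =>
      ∫ z in unitSphere 3, (c * ‖Matrix.toEuclideanLin M z‖ ^ 3 - d) ∂μH[(3:ℝ)-1]) := by
  intro A u hu hcsu htsu
  set S := unitSphere 3 with hSdef
  set φ : Matrix (Fin 3) (Fin 3) ℝ → ℝ := fun M =>
    ∫ z in S, (c * ‖Matrix.toEuclideanLin M z‖ ^ 3 - d) ∂μH[(3:ℝ)-1] with hφdef
  show φ A ≤ ∫ x in unitCube 3, φ (A + jac u x)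
  have hz1 : ∀ z ∈ S, ‖z‖ = (1:ℝ) := fun z hz => mem_sphere_zero_iff_norm.mp hz
  -- integrability on the sphere of relevant functions
  have hIcont : ∀ M : Matrix (Fin 3) (Fin 3) ℝ,
      Continuous fun z : EuclideanSpace ℝ (Fin 3) => c * ‖Matrix.toEuclideanLin M z‖ ^ 3 - d :=
    fun M => (continuous_const.mul (((tEL_cont M).norm).pow 3)).sub continuous_const
  have hIint : ∀ M, IntegrableOn
      (fun z => c * ‖Matrix.toEuclideanLin M z‖ ^ 3 - d) S μH[(3:ℝ)-1] :=
    fun M => sphere_integrable (hIcont M) hmtop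
  -- jacobian entries: continuity, compact support, boundedness
  have hjc : ∀ i j, Continuous fun x => jac u x i j := by
    intro i j
    have h1 : Continuous fun x => fderiv ℝ u x := hu.continuous_fderiv (by simp)
    have h2 : Continuous fun x => fderiv ℝ u x (EuclideanSpace.single j 1) :=
      h1.clm_apply continuous_const
    exact (EuclideanSpace.proj (𝕜 := ℝ) i).continuous.comp h2
  have hjcs : ∀ i j, HasCompactSupport fun x => jac u x i j := by
    intro i j
    apply (hcsu.fderiv ℝ).mono
    intro x hx
    simp only [Function.mem_support] at hx ⊢
    intro h0
    apply hx
    show (fderiv ℝ u x) (EuclideanSpace.single j 1) i = 0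
    rw [h0]; rfl
  obtain ⟨CJ, hCJ0, hCJ⟩ : ∃ CJ : ℝ, 0 ≤ CJ ∧ ∀ x i j, |jac u x i j| ≤ CJ := by
    have h3 : ∀ i j : Fin 3, ∃ C : ℝ, ∀ x, |jac u x i j| ≤ C := by
      intro i j
      obtain ⟨C, hC⟩ := (hjc i j).bounded_above_of_compact_support (hjcs i j)
      exact ⟨C, fun x => by simpa [Real.norm_eq_abs] using hC x⟩
    choose C hC using h3
    refine ⟨∑ i, ∑ j, C i j, ?_, ?_⟩
    · have : (0:ℝ) ≤ C 0 0 := le_trans (abs_nonneg _) (hC 0 0 0)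
      have hCnn : ∀ i j, (0:ℝ) ≤ C i j := fun i j => le_trans (abs_nonneg _) (hC i j 0)
      exact Finset.sum_nonneg fun i _ => Finset.sum_nonneg fun j _ => hCnn i j
    · intro x i j
      have hCnn : ∀ i j, (0:ℝ) ≤ C i j := fun i j => le_trans (abs_nonneg _) (hC i j 0)
      calc |jac u x i j| ≤ C i j := hC i j x
        _ ≤ ∑ j', C i j' := Finset.single_le_sum (fun j' _ => hCnn i j') (Finset.mem_univ j)
        _ ≤ ∑ i', ∑ j', C i' j' := Finset.single_le_sum
            (fun i' _ => Finset.sum_nonneg fun j' _ => hCnn i' j') (Finset.mem_univ i)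
  have hfrobJ : ∀ x, frob (jac u x) ≤ 3 * CJ := by
    intro x
    have h1 : ∑ i, ∑ j, jac u x i j ^ 2 ≤ (3 * CJ) ^ 2 := by
      have h2 : ∀ i j : Fin 3, jac u x i j ^ 2 ≤ CJ ^ 2 := by
        intro i j
        rw [← sq_abs]
        exact pow_le_pow_left₀ (abs_nonneg _) (hCJ x i j) 2
      calc ∑ i, ∑ j, jac u x i j ^ 2 ≤ ∑ _i : Fin 3, ∑ _j : Fin 3, CJ ^ 2 :=
            Finset.sum_le_sum fun i _ => Finset.sum_le_sum fun j _ => h2 i j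
        _ = 9 * CJ ^ 2 := by simp [Finset.sum_const]; ring
        _ ≤ (3 * CJ) ^ 2 := by nlinarith
    calc frob (jac u x) = Real.sqrt (∑ i, ∑ j, jac u x i j ^ 2) := rfl
      _ ≤ Real.sqrt ((3 * CJ) ^ 2) := Real.sqrt_le_sqrt h1
      _ = 3 * CJ := by rw [Real.sqrt_sq (by linarith)]
  -- uniform bound for the perturbed norms on the sphere
  have hnb : ∀ (x : EuclideanSpace ℝ (Fin 3)), ∀ z ∈ S,
      ‖Matrix.toEuclideanLin (A + jac u x) z‖ ≤ frob A + 3 * CJ := by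
    intro x z hz
    rw [tEL_add]
    calc ‖Matrix.toEuclideanLin A z + Matrix.toEuclideanLin (jac u x) z‖
        ≤ ‖Matrix.toEuclideanLin A z‖ + ‖Matrix.toEuclideanLin (jac u x) z‖ := norm_add_le _ _
      _ ≤ frob A * ‖z‖ + frob (jac u x) * ‖z‖ := add_le_add (tEL_norm_le _ _) (tEL_norm_le _ _)
      _ = frob A + frob (jac u x) := by rw [hz1 z hz]; ring
      _ ≤ frob A + 3 * CJ := by linarith [hfrobJ x]
  -- finiteness instance
  haveI hfinS : IsFiniteMeasure ((μH[(3:ℝ)-1]).restrict S) := by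
    constructor
    rw [Measure.restrict_apply_univ]
    exact lt_top_iff_ne_top.mpr hmtop
  -- subgradient coefficients
  set Mco : Fin 3 → Fin 3 → ℝ := fun i j =>
    ∫ z in S, 3 * c * ‖Matrix.toEuclideanLin A z‖ * (Matrix.toEuclideanLin A z) i * (z j)
      ∂μH[(3:ℝ)-1] with hMco
  have hproj : ∀ (i : Fin 3), Continuous fun z : EuclideanSpace ℝ (Fin 3) => z i :=
    fun i => (EuclideanSpace.proj (𝕜 := ℝ) i).continuous
  have hAi : ∀ (i : Fin 3), Continuous fun z => (Matrix.toEuclideanLin A z) i :=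
    fun i => (hproj i).comp (tEL_cont A)
  have htermcont : ∀ i j : Fin 3, Continuous fun z : EuclideanSpace ℝ (Fin 3) =>
      3 * c * ‖Matrix.toEuclideanLin A z‖ * (Matrix.toEuclideanLin A z) i * (z j) :=
    fun i j => ((continuous_const.mul (tEL_cont A).norm).mul (hAi i)).mul (hproj j)
  have hF2cont : ∀ x, Continuous fun z : EuclideanSpace ℝ (Fin 3) =>
      3 * c * ‖Matrix.toEuclideanLin A z‖
        * (inner ℝ (Matrix.toEuclideanLin A z) (Matrix.toEuclideanLin (jac u x) z) : ℝ) :=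
    fun x => (continuous_const.mul (tEL_cont A).norm).mul
      ((tEL_cont A).inner (tEL_cont (jac u x)))
  have hF2int : ∀ x, IntegrableOn (fun z =>
      3 * c * ‖Matrix.toEuclideanLin A z‖
        * (inner ℝ (Matrix.toEuclideanLin A z) (Matrix.toEuclideanLin (jac u x) z) : ℝ))
      S μH[(3:ℝ)-1] := fun x => sphere_integrable (hF2cont x) hmtop
  -- expansion of the linear term
  have hexp : ∀ (x : EuclideanSpace ℝ (Fin 3)) (z : EuclideanSpace ℝ (Fin 3)),
      3 * c * ‖Matrix.toEuclideanLin A z‖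
        * (inner ℝ (Matrix.toEuclideanLin A z) (Matrix.toEuclideanLin (jac u x) z) : ℝ)
      = ∑ p : Fin 3 × Fin 3, jac u x p.1 p.2
          * (3 * c * ‖Matrix.toEuclideanLin A z‖ * (Matrix.toEuclideanLin A z) p.1 * (z p.2)) := by
    intro x z
    rw [inner_expand, Fintype.sum_prod_type]
    rw [Finset.mul_sum]
    refine Finset.sum_congr rfl fun i _ => ?_
    rw [Finset.mul_sum, Finset.mul_sum]
    refine Finset.sum_congr rfl fun j _ => ?_
    ring
  have hintsum : ∀ x, ∫ z in S,
      (3 * c * ‖Matrix.toEuclideanLin A z‖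
        * (inner ℝ (Matrix.toEuclideanLin A z) (Matrix.toEuclideanLin (jac u x) z) : ℝ)) ∂μH[(3:ℝ)-1]
      = ∑ p : Fin 3 × Fin 3, Mco p.1 p.2 * jac u x p.1 p.2 := by
    intro x
    have e1 : ∫ z in S,
        (3 * c * ‖Matrix.toEuclideanLin A z‖
          * (inner ℝ (Matrix.toEuclideanLin A z) (Matrix.toEuclideanLin (jac u x) z) : ℝ)) ∂μH[(3:ℝ)-1]
        = ∫ z in S, (∑ p : Fin 3 × Fin 3, jac u x p.1 p.2
            * (3 * c * ‖Matrix.toEuclideanLin A z‖ * (Matrix.toEuclideanLin A z) p.1 * (z p.2)))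
            ∂μH[(3:ℝ)-1] := by
      apply integral_congr_ae
      filter_upwards with z
      exact hexp x z
    rw [e1, integral_finset_sum]
    · refine Finset.sum_congr rfl fun p _ => ?_
      rw [integral_const_mul]
      ring
    · intro p _
      exact ((sphere_integrable (htermcont p.1 p.2) hmtop).const_mul _)
  -- pointwise subgradient inequality
  have hptw : ∀ x : EuclideanSpace ℝ (Fin 3),
      φ A + ∑ p : Fin 3 × Fin 3, Mco p.1 p.2 * jac u x p.1 p.2 ≤ φ (A + jac u x) := by
    intro x
    have h1 : φ A + ∑ p : Fin 3 × Fin 3, Mco p.1 p.2 * jac u x p.1 p.2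
        = ∫ z in S, ((c * ‖Matrix.toEuclideanLin A z‖ ^ 3 - d)
            + 3 * c * ‖Matrix.toEuclideanLin A z‖
              * (inner ℝ (Matrix.toEuclideanLin A z) (Matrix.toEuclideanLin (jac u x) z) : ℝ))
            ∂μH[(3:ℝ)-1] := by
      rw [integral_add (hIint A) (hF2int x), hintsum x]
    rw [h1]
    apply setIntegral_mono_on ((hIint A).add (hF2int x)) (hIint (A + jac u x)) sphere_measurable
    intro z _
    have hsub := cube_subgrad (Matrix.toEuclideanLin A z)
      (Matrix.toEuclideanLin A z + Matrix.toEuclideanLin (jac u x) z)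
    rw [add_sub_cancel_left] at hsub
    have hsub2 := mul_le_mul_of_nonneg_left hsub hc
    rw [tEL_add]
    simp only [Pi.add_apply]
    nlinarith [hsub2]
  -- continuity of the perturbed integral in x
  have hTELcont : ∀ z : EuclideanSpace ℝ (Fin 3),
      Continuous fun x => Matrix.toEuclideanLin (jac u x) z := by
    intro z
    have hco : Continuous fun x : EuclideanSpace ℝ (Fin 3) =>
        (fun i => ∑ j, jac u x i j * z j : Fin 3 → ℝ) :=
      continuous_pi fun i => continuous_finset_sum _ fun j _ => (hjc i j).mul continuous_const
    have hee : ∀ x, Matrix.toEuclideanLin (jac u x) z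
        = (EuclideanSpace.equiv (Fin 3) ℝ).symm (fun i => ∑ j, jac u x i j * z j) := by
      intro x
      apply PiLp.ext
      intro i
      rw [tEL_coord]
      rfl
    exact (((EuclideanSpace.equiv (Fin 3) ℝ).symm.continuous.comp hco)).congr
      fun x => (hee x).symm
  have hΦcont : Continuous fun x => φ (A + jac u x) := by
    have := MeasureTheory.continuous_of_dominated
      (F := fun (x z : EuclideanSpace ℝ (Fin 3)) =>
        c * ‖Matrix.toEuclideanLin (A + jac u x) z‖ ^ 3 - d)
      (bound := fun _ => c * (frob A + 3 * CJ) ^ 3 + |d|)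
      (μ := (μH[(3:ℝ)-1]).restrict S) ?_ ?_ ?_ ?_
    · exact this
    · exact fun x => (hIcont (A + jac u x)).aestronglyMeasurable.restrict
    · intro x
      rw [ae_restrict_iff' sphere_measurable]
      filter_upwards with z hz
      have h5 : ‖Matrix.toEuclideanLin (A + jac u x) z‖ ≤ frob A + 3 * CJ := hnb x z hz
      have h6 : (0:ℝ) ≤ ‖Matrix.toEuclideanLin (A + jac u x) z‖ := norm_nonneg _
      have h7 : ‖Matrix.toEuclideanLin (A + jac u x) z‖ ^ 3 ≤ (frob A + 3 * CJ) ^ 3 :=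
        pow_le_pow_left₀ h6 h5 3
      rw [Real.norm_eq_abs]
      calc |c * ‖Matrix.toEuclideanLin (A + jac u x) z‖ ^ 3 - d|
          ≤ |c * ‖Matrix.toEuclideanLin (A + jac u x) z‖ ^ 3| + |d| := abs_sub _ _
        _ = c * ‖Matrix.toEuclideanLin (A + jac u x) z‖ ^ 3 + |d| := by
            rw [abs_of_nonneg (by positivity)]
        _ ≤ c * (frob A + 3 * CJ) ^ 3 + |d| := by
            have := mul_le_mul_of_nonneg_left h7 hc
            linarith
    · exact integrable_const _
    · filter_upwards with z
      have h8 : Continuous fun x => Matrix.toEuclideanLin (A + jac u x) z := by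
        have : ∀ x, Matrix.toEuclideanLin (A + jac u x) z
            = Matrix.toEuclideanLin A z + Matrix.toEuclideanLin (jac u x) z := fun x => tEL_add _ _ _
        exact ((continuous_const.add (hTELcont z))).congr fun x => (this x).symm
      exact (continuous_const.mul (h8.norm.pow 3)).sub continuous_const
  -- integrability over the cube
  have hΦbd : ∀ x, ‖φ (A + jac u x)‖
      ≤ (c * (frob A + 3 * CJ) ^ 3 + |d|) * (((μH[(3:ℝ)-1]).restrict S) Set.univ).toReal := by
    intro x
    apply norm_integral_le_of_norm_le_const
    rw [ae_restrict_iff' sphere_measurable]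
    filter_upwards with z hz
    have h5 : ‖Matrix.toEuclideanLin (A + jac u x) z‖ ≤ frob A + 3 * CJ := hnb x z hz
    have h6 : (0:ℝ) ≤ ‖Matrix.toEuclideanLin (A + jac u x) z‖ := norm_nonneg _
    have h7 : ‖Matrix.toEuclideanLin (A + jac u x) z‖ ^ 3 ≤ (frob A + 3 * CJ) ^ 3 :=
      pow_le_pow_left₀ h6 h5 3
    rw [Real.norm_eq_abs]
    calc |c * ‖Matrix.toEuclideanLin (A + jac u x) z‖ ^ 3 - d|
        ≤ |c * ‖Matrix.toEuclideanLin (A + jac u x) z‖ ^ 3| + |d| := abs_sub _ _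
      _ = c * ‖Matrix.toEuclideanLin (A + jac u x) z‖ ^ 3 + |d| := by
          rw [abs_of_nonneg (by positivity)]
      _ ≤ c * (frob A + 3 * CJ) ^ 3 + |d| := by
          have := mul_le_mul_of_nonneg_left h7 hc
          linarith
  haveI hfinC : IsFiniteMeasure (volume.restrict (unitCube 3)) := by
    constructor
    rw [Measure.restrict_apply_univ]
    exact cube_finite
  have hΦint : IntegrableOn (fun x => φ (A + jac u x)) (unitCube 3) volume := by
    apply Integrable.mono'
      (integrable_const ((c * (frob A + 3 * CJ) ^ 3 + |d|)
        * (((μH[(3:ℝ)-1]).restrict S) Set.univ).toReal))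
      (hΦcont.aestronglyMeasurable.restrict)
    · filter_upwards with x
      exact hΦbd x
  have hψint : IntegrableOn (fun x =>
      φ A + ∑ p : Fin 3 × Fin 3, Mco p.1 p.2 * jac u x p.1 p.2) (unitCube 3) volume := by
    apply Integrable.add
    · exact integrableOn_const cube_finite.ne
    · apply integrable_finset_sum
      intro p _
      exact (((hjc p.1 p.2).integrable_of_hasCompactSupport (hjcs p.1 p.2)).integrableOn).const_mul _
  -- conclusion
  have hzero : ∀ p : Fin 3 × Fin 3, ∫ x in unitCube 3, jac u x p.1 p.2 = 0 :=
    fun p => jac_integral_zero hu hcsu htsu p.1 p.2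
  have key : ∫ x in unitCube 3,
      (φ A + ∑ p : Fin 3 × Fin 3, Mco p.1 p.2 * jac u x p.1 p.2) = φ A := by
    rw [integral_add]
    · rw [cube_integral_const, integral_finset_sum]
      · have : ∀ p : Fin 3 × Fin 3, (p ∈ Finset.univ) →
            ∫ x in unitCube 3, Mco p.1 p.2 * jac u x p.1 p.2 = 0 := by
          intro p _
          rw [integral_const_mul, hzero p, mul_zero]
        rw [Finset.sum_congr rfl this]
        simp
      · intro p _
        exact (((hjc p.1 p.2).integrable_of_hasCompactSupport
          (hjcs p.1 p.2)).integrableOn).const_mul _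
    · exact integrableOn_const cube_finite.ne
    · apply integrable_finset_sum
      intro p _
      exact (((hjc p.1 p.2).integrable_of_hasCompactSupport (hjcs p.1 p.2)).integrableOn).const_mul _
  calc φ A = ∫ x in unitCube 3,
        (φ A + ∑ p : Fin 3 × Fin 3, Mco p.1 p.2 * jac u x p.1 p.2) := key.symm
    _ ≤ ∫ x in unitCube 3, φ (A + jac u x) :=
        setIntegral_mono_on hψint hΦint cube_measurable fun x _ => hptw x
lemma frob_zero : frob (0 : Matrix (Fin 3) (Fin 3) ℝ) = 0 := by
  rw [frob]
  simp

/-- Mooney–Rivlin stored-energy functions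
`W(A) = α|A|² + β|cof A|² + g(det A)` are not recoverable from bond-based peridynamics:
there are no `w̄` and `w̃` with `w̄(A) = ∫_{S²} w̃(|Az|) dH²(z)` and `W = w̄^{qc}`. -/
theorem statement17 (g : ℝ → ℝ) (hg0 : ∀ t, 0 ≤ g t)
    (hgconv : ConvexOn ℝ Set.univ g)
    (a : ℝ) (ha : 0 < a) (hmono : MonotoneOn g (Set.Ici a))
    (α β : ℝ) (hα : 0 ≤ α) (hβ : 0 ≤ β)
    (hcase : 0 < α ∨ 0 < β ∨ StrictConvexOn ℝ Set.univ g)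
    (hβ0 : β = 0 → ∀ t : ℝ, a ≤ t → ∃ t₁ : ℝ, t < t₁ ∧ g t < g t₁)
    (W : Matrix (Fin 3) (Fin 3) ℝ → ℝ)
    (hW : ∀ A, W A = α * frob A ^ 2 + β * frob (cof A) ^ 2 + g A.det) :
    ¬ ∃ (wbar : Matrix (Fin 3) (Fin 3) ℝ → ℝ) (wt : ℝ → ℝ),
        (∀ A : Matrix (Fin 3) (Fin 3) ℝ,
          IntegrableOn (fun z => wt ‖Matrix.toEuclideanLin A z‖) (unitSphere 3)
              μH[(3 : ℝ) - 1] ∧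
          wbar A = ∫ z in unitSphere 3, wt ‖Matrix.toEuclideanLin A z‖ ∂μH[(3 : ℝ) - 1]) ∧
        (∀ A, W A = qcEnvelope wbar A) := by
  rintro ⟨wbar, wt, hint, hWqc⟩
  -- a matrix where W is positive
  obtain ⟨A₀, hA₀⟩ : ∃ A₀, 0 < W A₀ := by
    rcases eq_or_lt_of_le hβ with hβ0' | hβpos
    · obtain ⟨t₁, hat₁, hgat₁⟩ := hβ0 hβ0'.symm a le_rfl
      have ht₁pos : 0 < t₁ := lt_trans ha hat₁
      set t : ℝ := t₁ ^ ((1:ℝ)/3) with htdef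
      have htpos : 0 < t := Real.rpow_pos_of_pos ht₁pos _
      have ht3 : t ^ (3:ℕ) = t₁ := by
        rw [htdef, ← Real.rpow_natCast (t₁ ^ ((1:ℝ)/3)) 3, ← Real.rpow_mul ht₁pos.le]
        norm_num
      refine ⟨t • 1, ?_⟩
      rw [hW, frobsq_smul_one, cof_smul_one, frobsq_smul_one, det_smul_one, ht3]
      have h1 : 0 ≤ α * (3 * t^2) := mul_nonneg hα (by positivity)
      have h2 : 0 ≤ β * (3 * (t^2)^2) := mul_nonneg hβ (by positivity)
      have h3 : 0 ≤ g a := hg0 a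
      linarith
    · refine ⟨(1:ℝ) • 1, ?_⟩
      rw [hW, frobsq_smul_one, cof_smul_one, frobsq_smul_one, det_smul_one]
      have h1 : 0 ≤ α * (3 * (1:ℝ)^2) := mul_nonneg hα (by norm_num)
      have h3 := hg0 ((1:ℝ)^3)
      nlinarith
  by_cases hcomp : ∃ v : Matrix (Fin 3) (Fin 3) ℝ → ℝ,
      MorreyQuasiconvex v ∧ ∀ B, v B ≤ wbar B
  case neg =>
    have hz : W A₀ = 0 := by
      rw [hWqc A₀, qcEnvelope]
      have hempty : {r | ∃ v : Matrix (Fin 3) (Fin 3) ℝ → ℝ,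
          MorreyQuasiconvex v ∧ (∀ B, v B ≤ wbar B) ∧ v A₀ = r} = ∅ := by
        rw [Set.eq_empty_iff_forall_notMem]
        rintro r ⟨v, h1, h2, _⟩
        exact hcomp ⟨v, h1, h2⟩
      rw [hempty]
      exact Real.sSup_empty
    linarith
  case pos =>
  obtain ⟨v₀, hv₀qc, hv₀le⟩ := hcomp
  have hbdd : ∀ B : Matrix (Fin 3) (Fin 3) ℝ, BddAbove {r | ∃ v : Matrix (Fin 3) (Fin 3) ℝ → ℝ,
      MorreyQuasiconvex v ∧ (∀ C, v C ≤ wbar C) ∧ v B = r} := by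
    intro B
    refine ⟨wbar B, ?_⟩
    rintro r ⟨v, _, h2, rfl⟩
    exact h2 B
  have hle : ∀ B, W B ≤ wbar B := by
    intro B
    rw [hWqc B, qcEnvelope]
    refine csSup_le ⟨v₀ B, ⟨v₀, hv₀qc, hv₀le, rfl⟩⟩ ?_
    rintro r ⟨v, _, h2, rfl⟩
    exact h2 B
  have hub : ∀ ψ : Matrix (Fin 3) (Fin 3) ℝ → ℝ, MorreyQuasiconvex ψ →
      (∀ C, ψ C ≤ wbar C) → ∀ B, ψ B ≤ W B := by
    intro ψ h1 h2 B
    rw [hWqc B, qcEnvelope]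
    exact le_csSup (hbdd B) ⟨ψ, h1, h2, rfl⟩
  -- value of wbar at conformal matrices
  have hsmulwbar : ∀ t : ℝ, 0 ≤ t →
      wbar (t • 1) = (μH[(3:ℝ)-1] (unitSphere 3)).toReal * wt t := by
    intro t ht
    rw [(hint (t • 1)).2]
    have heq : Set.EqOn (fun z => wt ‖Matrix.toEuclideanLin (t • (1:Matrix (Fin 3) (Fin 3) ℝ)) z‖)
        (fun _ => wt t) (unitSphere 3) := by
      intro z hz
      simp only
      rw [tEL_smul_one, norm_smul, mem_sphere_zero_iff_norm.mp hz, Real.norm_eq_abs,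
        abs_of_nonneg ht, mul_one]
    rw [setIntegral_congr_fun sphere_measurable heq, setIntegral_const, measureReal_def, smul_eq_mul]
  rcases eq_or_ne (μH[(3:ℝ)-1] (unitSphere 3)) 0 with hm0 | hm0
  · have hz : wbar A₀ = 0 := by
      rw [(hint A₀).2]
      have hres : (μH[(3:ℝ)-1]).restrict (unitSphere 3) = 0 := Measure.restrict_eq_zero.mpr hm0
      rw [hres, integral_zero_measure]
    linarith [hle A₀]
  rcases eq_or_ne (μH[(3:ℝ)-1] (unitSphere 3)) ⊤ with hmtop | hmtop
  · have hwt0 : ∀ s : ℝ, 0 ≤ s → wt s = 0 := by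
      intro s hs
      have h1 := (hint (s • (1:Matrix (Fin 3) (Fin 3) ℝ))).1
      have heq : Set.EqOn (fun z => wt ‖Matrix.toEuclideanLin (s • (1:Matrix (Fin 3) (Fin 3) ℝ)) z‖)
          (fun _ => wt s) (unitSphere 3) := by
        intro z hz
        simp only
        rw [tEL_smul_one, norm_smul, mem_sphere_zero_iff_norm.mp hz, Real.norm_eq_abs,
          abs_of_nonneg hs, mul_one]
      have h2 : IntegrableOn (fun _ => wt s) (unitSphere 3) μH[(3:ℝ)-1] :=
        h1.congr_fun heq sphere_measurable
      rcases integrable_const_iff.mp h2 with h | h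
      · exact h
      · exfalso
        exact isFiniteMeasure_restrict.mp h hmtop
    have hz : wbar A₀ = 0 := by
      rw [(hint A₀).2]
      have hzero : (fun z => wt ‖Matrix.toEuclideanLin A₀ z‖)
          = fun _ : EuclideanSpace ℝ (Fin 3) => (0:ℝ) := by
        funext z
        exact hwt0 _ (norm_nonneg _)
      rw [hzero, integral_zero]
    linarith [hle A₀]
  -- main case : 0 < μ(S²) < ∞
  set m' : ℝ := (μH[(3:ℝ)-1] (unitSphere 3)).toReal with hm'def
  have hm'pos : 0 < m' := ENNReal.toReal_pos hm0 hmtop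
  have hwtlb : ∀ t : ℝ, 0 ≤ t → 3*β*t^4 + g (t^3) ≤ m' * wt t := by
    intro t ht
    have h1 := hle (t • 1)
    rw [hW, frobsq_smul_one, cof_smul_one, frobsq_smul_one, det_smul_one,
      hsmulwbar t ht] at h1
    have h2 : 0 ≤ α * (3 * t^2) := mul_nonneg hα (by positivity)
    nlinarith
  obtain ⟨c, d, hcpos, hd0, hcd⟩ : ∃ c d : ℝ, 0 < c ∧ 0 ≤ d ∧
      ∀ t : ℝ, 0 ≤ t → c * t^3 - d ≤ wt t := by
    rcases eq_or_lt_of_le hβ with hβ0' | hβpos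
    · obtain ⟨t₁, hat₁, hgat₁⟩ := hβ0 hβ0'.symm a le_rfl
      obtain ⟨sl, hslpos, hlin⟩ := lin_minorant hgconv hg0 hat₁ hgat₁
      have ht₁pos : 0 < t₁ := lt_trans ha hat₁
      refine ⟨sl / m', sl * t₁ / m', div_pos hslpos hm'pos,
        div_nonneg (by positivity) hm'pos.le, ?_⟩
      intro t ht
      have h3 := hlin (t^3) (by positivity)
      have h4 := hwtlb t ht
      rw [← hβ0'] at h4
      have h5 : sl * t^3 - sl * t₁ ≤ m' * wt t := by nlinarith
      have h6 : (sl * t^3 - sl * t₁) / m' ≤ wt t := by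
        rw [div_le_iff₀ hm'pos]; linarith
      calc sl / m' * t^3 - sl * t₁ / m' = (sl * t^3 - sl * t₁)/m' := by ring
        _ ≤ wt t := h6
    · refine ⟨3*β/m', 3*β/m', div_pos (by linarith) hm'pos,
        div_nonneg (by linarith) hm'pos.le, ?_⟩
      intro t ht
      have h4 := hwtlb t ht
      have ht4 : t^3 - 1 ≤ t^4 := by
        rcases le_or_gt t 1 with h | h
        · have h8 : t^3 ≤ 1 := pow_le_one₀ ht h
          have h9 : 0 ≤ t^4 := by positivity
          linarith
        · have h8 : t^3 ≤ t^4 := pow_le_pow_right₀ h.le (by norm_num)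
          linarith
      have h5 : (3*β) * (t^3 - 1) ≤ m' * wt t := by nlinarith [hg0 (t^3)]
      have h6 : (3*β*t^3 - 3*β) / m' ≤ wt t := by
        rw [div_le_iff₀ hm'pos]; linarith
      calc 3*β/m' * t^3 - 3*β/m' = (3*β*t^3 - 3*β)/m' := by ring
        _ ≤ wt t := h6
  -- quasiconvex competitor
  set φ : Matrix (Fin 3) (Fin 3) ℝ → ℝ := fun M =>
    ∫ z in unitSphere 3, (c * ‖Matrix.toEuclideanLin M z‖ ^ 3 - d) ∂μH[(3:ℝ)-1] with hφdef
  have hφqc : MorreyQuasiconvex φ := phi_qc c d hcpos.le hmtop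
  have hφle : ∀ M, φ M ≤ wbar M := by
    intro M
    rw [hφdef]
    simp only
    rw [(hint M).2]
    apply setIntegral_mono_on
      (sphere_integrable ((continuous_const.mul ((tEL_cont M).norm.pow 3)).sub
        continuous_const) hmtop)
      (hint M).1 sphere_measurable
    intro z _
    exact hcd _ (norm_nonneg _)
  have hφW : ∀ M, φ M ≤ W M := hub φ hφqc hφle
  -- third moments of the coordinates vanish
  set K : Fin 3 → ℝ := fun i => ∫ z in unitSphere 3, |z i| ^ 3 ∂μH[(3:ℝ)-1] with hKdef
  have hKcont : ∀ i : Fin 3, Continuous fun z : EuclideanSpace ℝ (Fin 3) => |z i| ^ 3 :=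
    fun i => ((EuclideanSpace.proj (𝕜:=ℝ) i).continuous.abs).pow 3
  have hKint : ∀ i, IntegrableOn (fun z : EuclideanSpace ℝ (Fin 3) => |z i|^3)
      (unitSphere 3) μH[(3:ℝ)-1] := fun i => sphere_integrable (hKcont i) hmtop
  have hKnn : ∀ i, 0 ≤ K i := fun i => setIntegral_nonneg sphere_measurable fun z _ => by positivity
  have hφstd : ∀ (i : Fin 3) (t : ℝ), 0 ≤ t →
      φ (Matrix.single i i t) = c * t^3 * K i - d * m' := by
    intro i t ht
    rw [hφdef]
    simp only
    have heq : Set.EqOn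
        (fun z => c * ‖Matrix.toEuclideanLin (Matrix.single i i t) z‖^3 - d)
        (fun z => (c * t^3) * |z i|^3 - d) (unitSphere 3) := by
      intro z _
      simp only
      rw [tEL_std_norm, abs_mul, abs_of_nonneg ht, mul_pow]
      ring
    rw [setIntegral_congr_fun sphere_measurable heq]
    rw [integral_sub ((hKint i).const_mul (c*t^3))
      (integrableOn_const hmtop)]
    rw [integral_const_mul, setIntegral_const, measureReal_def, smul_eq_mul]
    rw [hKdef]
    simp only
    ring
  have hK0 : ∀ i, K i = 0 := by
    intro i
    by_contra hne
    have hKpos : 0 < K i := lt_of_le_of_ne (hKnn i) (Ne.symm hne)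
    set T : ℝ := max 1 ((α + g 0 + d * m' + 1)/(c * K i)) with hT
    have hT1 : (1:ℝ) ≤ T := le_max_left _ _
    have hT0 : (0:ℝ) ≤ T := by linarith
    have hT2 : (α + g 0 + d*m' + 1) ≤ c * K i * T := by
      have h7 := le_max_right 1 ((α + g 0 + d * m' + 1)/(c * K i))
      rw [div_le_iff₀ (by positivity)] at h7
      nlinarith
    have hφs := hφW (Matrix.single i i T)
    rw [hφstd i T hT0, hW, frobsq_std, cof_std, det_std, frob_zero] at hφs
    have hTsq : 1 ≤ T^2 := by nlinarith
    have h9 : (α + g 0 + d*m' + 1) * T^2 ≤ (c*K i*T)*T^2 :=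
      mul_le_mul_of_nonneg_right hT2 (by positivity)
    have h10 : α*T^2 + (g 0 + d*m' + 1) ≤ (α + g 0 + d*m' + 1)*T^2 := by
      have hgd : 0 ≤ g 0 + d*m' := by
        have := hg0 0
        have : 0 ≤ d * m' := mul_nonneg hd0 hm'pos.le
        linarith [hg0 0]
      nlinarith
    nlinarith
  have hsum0 : ∫ z in unitSphere 3, (∑ i, |z i|^3) ∂μH[(3:ℝ)-1] = 0 := by
    rw [integral_finset_sum _ (fun i _ => hKint i)]
    have : ∀ i : Fin 3, (i ∈ Finset.univ) →
        ∫ z in unitSphere 3, |z i|^3 ∂μH[(3:ℝ)-1] = 0 := fun i _ => hK0 i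
    rw [Finset.sum_congr rfl this]
    simp
  have hlow : ∀ z ∈ unitSphere 3, (1:ℝ)/8 ≤ ∑ i, |z i|^3 := by
    intro z hz
    have hnorm : ‖z‖ = 1 := mem_sphere_zero_iff_norm.mp hz
    have hsq : ∑ i, (z i)^2 = 1 := by
      have h1 := EuclideanSpace.norm_eq z
      rw [hnorm] at h1
      have h2 : Real.sqrt (∑ i, ‖z i‖^2) = 1 := h1.symm
      have h3 : ∑ i, ‖z i‖^2 = 1 := by
        have h4 := Real.sq_sqrt (show (0:ℝ) ≤ ∑ i, ‖z i‖^2 by positivity)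
        rw [h2] at h4
        linarith
      calc ∑ i, (z i)^2 = ∑ i, ‖z i‖^2 := by
            refine Finset.sum_congr rfl fun i _ => ?_
            rw [Real.norm_eq_abs, sq_abs]
        _ = 1 := h3
    obtain ⟨i, hi⟩ : ∃ i : Fin 3, (1:ℝ)/3 ≤ (z i)^2 := by
      by_contra hno
      push_neg at hno
      have h5 := Fin.sum_univ_three (fun i => (z i)^2)
      rw [hsq] at h5
      nlinarith [hno 0, hno 1, hno 2]
    have habs : (1:ℝ)/2 ≤ |z i| := by
      by_contra hcon
      push_neg at hcon
      have h6 : |z i|^2 < (1/2)^2 := by nlinarith [abs_nonneg (z i)]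
      rw [sq_abs] at h6
      nlinarith
    have hcube : (1:ℝ)/8 ≤ |z i|^3 := by
      have h7 := pow_le_pow_left₀ (by norm_num : (0:ℝ) ≤ 1/2) habs 3
      norm_num at h7
      linarith
    calc (1:ℝ)/8 ≤ |z i|^3 := hcube
      _ ≤ ∑ j, |z j|^3 := Finset.single_le_sum (f := fun j => |z j|^3)
          (fun j _ => by positivity) (Finset.mem_univ i)
  have hfinal : (1:ℝ)/8 * m' ≤ 0 := by
    have h1 : ∫ z in unitSphere 3, ((1:ℝ)/8) ∂μH[(3:ℝ)-1] = m' * (1/8) := by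
      rw [setIntegral_const, measureReal_def, smul_eq_mul]
    have h2 : ∫ z in unitSphere 3, ((1:ℝ)/8) ∂μH[(3:ℝ)-1]
        ≤ ∫ z in unitSphere 3, (∑ i, |z i|^3) ∂μH[(3:ℝ)-1] := by
      apply setIntegral_mono_on
        (integrableOn_const hmtop)
        (integrable_finset_sum _ (fun i _ => hKint i)) sphere_measurable
      intro z hz
      exact hlow z hz
    rw [h1, hsum0] at h2
    linarith
  nlinarith

end
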